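/- Let X be a nonempty set, let U and V be real Banach spaces whose elements are real-valued functions on X and such that for every x ∈ X the evaluation maps w ↦ w(x) are continuous linear functionals on U and on V. Let T : dom(T) ⊆ U → V be a closed linear operator, let (Ω, Σ, P) be a probability space, let u : Ω → U satisfy u(ω) ∈ dom(T) P-a.s., and set v(ω) := T(u(ω)). Suppose ∫_Ω ‖u(ω)‖_U² dP(ω) < ∞ and ∫_Ω ‖v(ω)‖_V² dP(ω) < ∞, and write m_u := E[u], m_v := E[v] for the Bochner means and k_u(x₁,x₂) := Cov(u(x₁), u(x₂)), k_v(x₁,x₂) := Cov(v(x₁), v(x₂)) for the covariance functions. Then for all x₁, x₂ ∈ X, the covariance k_v(x₁, x₂) is obtained from k_u by applying T successively in each argument, in either order: k_v(x₁, x₂) = (T E[(v(x₂) − m_v(x₂))(u − m_u)])(x₁) = (T E[(v(x₁) − m_v(x₁))(u − m_u)])(x₂), where for each fixed x ∈ X the U-valued Bochner mean E[(v(x) − m_v(x))(u − m_u)] belongs to dom(T), and where for each fixed x₁ the function x ↦ Cov(u(x₁), v(x)) equals T applied to the element E[(u(x₁) − m_u(x₁))(u − m_u)] ∈ dom(T)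 of U. In particular, applying T first in the second argument of k_u and then in the first yields the same function as applying T first in the first argument and then in the second, namely k_v. -/

import Mathlib

/-!
The graph of a closed operator is a closed subspace of `U × V`, so it contains the Bochner
integral of every integrable graph-valued process. The pair `(u, v)` is graph-valued, hence so
are its mean, its centering `(u - m_u, v - m_v)` and every product `s • (u - m_u, v - m_v)` with a
scalar `s ∈ L²`. Integrating gives `T E[s (u - m_u)] = E[s (v - m_v)]`, and evaluating at a point,
which commutes with the integral, turns this into a covariance for `s = v(x) - m_v(x)` and
`s = u(x) - m_u(x)`.
-/

open MeasureTheory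

namespace LinearPMap

theorem apply_eq_of_mem_graph {R E F : Type*} [Ring R] [AddCommGroup E] [Module R E]
    [AddCommGroup F] [Module R F] {T : E →ₗ.[R] F} {x : E} {y : F} (h : (x, y) ∈ T.graph) :
    T ⟨x, mem_domain_of_mem_graph h⟩ = y :=
  ((image_iff _).mpr h).symm

variable {E F : Type*} [NormedAddCommGroup E] [NormedSpace ℝ E] [CompleteSpace E]
  [NormedAddCommGroup F] [NormedSpace ℝ F] [CompleteSpace F] {T : E →ₗ.[ℝ] F}
  {Ω : Type*} [MeasurableSpace Ω] {P : Measure Ω} [IsProbabilityMeasure P]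

theorem IsClosed.integral_mem_graph (hT : T.IsClosed) {f : Ω → E} {g : Ω → F}
    (hfg : ∀ᵐ ω ∂P, (f ω, g ω) ∈ T.graph) (hf : Integrable f P) (hg : Integrable g P) :
    (∫ ω, f ω ∂P, ∫ ω, g ω ∂P) ∈ T.graph := by
  rw [← integral_pair hf hg]
  exact T.graph.convex.integral_mem hT hfg (hf.prodMk hg)

theorem IsClosed.integral_smul_mem_graph (hT : T.IsClosed) {p q : ENNReal}
    [p.HolderTriple q 1] {f : Ω → E} {g : Ω → F} {s : Ω → ℝ}
    (hfg : ∀ᵐ ω ∂P, (f ω, g ω) ∈ T.graph) (hf : MemLp f q P) (hg : MemLp g q P)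
    (hs : MemLp s p P) :
    (∫ ω, s ω • f ω ∂P, ∫ ω, s ω • g ω ∂P) ∈ T.graph := by
  refine hT.integral_mem_graph ?_ (memLp_one_iff_integrable.mp (hf.smul hs))
    (memLp_one_iff_integrable.mp (hg.smul hs))
  filter_upwards [hfg] with ω hω
  exact T.graph.smul_mem (s ω) hω

end LinearPMap

theorem ContinuousLinearMap.apply_integral_smul {F Ω : Type*} [NormedAddCommGroup F]
    [NormedSpace ℝ F] [CompleteSpace F] [MeasurableSpace Ω] {P : Measure Ω}
    (ℓ : F →L[ℝ] ℝ) {s : Ω → ℝ} {g : Ω → F} (h : Integrable (fun ω => s ω • g ω) P) :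
    ℓ (∫ ω, s ω • g ω ∂P) = ∫ ω, s ω * ℓ (g ω) ∂P := by
  simp_rw [← smul_eq_mul, ← map_smul]
  exact (ℓ.integral_comp_comm h).symm

theorem stmt_5_general {X : Type*} {U V : Type*}
    [NormedAddCommGroup U] [NormedSpace ℝ U] [CompleteSpace U]
    [NormedAddCommGroup V] [NormedSpace ℝ V] [CompleteSpace V]
    (ιU : U →ₗ[ℝ] (X → ℝ))
    (hevU : ∀ x : X, Continuous fun w : U => ιU w x)
    (ιV : V →ₗ[ℝ] (X → ℝ))
    (hevV : ∀ x : X, Continuous fun w : V => ιV w x)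
    (T : U →ₗ.[ℝ] V) (hT : T.IsClosed)
    {Ω : Type*} [MeasurableSpace Ω] (P : Measure Ω) [IsProbabilityMeasure P]
    (u : Ω → U) (v : Ω → V)
    (huv : ∀ᵐ ω ∂P, (u ω, v ω) ∈ T.graph)
    (hu2 : MemLp u 2 P) (hv2 : MemLp v 2 P) :
    ∃ hdomv : ∀ x : X,
        (∫ ω, (ιV (v ω) x - ιV (∫ ω', v ω' ∂P) x) • (u ω - ∫ ω', u ω' ∂P) ∂P) ∈ T.domain,
    ∃ hdomu : ∀ x : X,
        (∫ ω, (ιU (u ω) x - ιU (∫ ω', u ω' ∂P) x) • (u ω - ∫ ω', u ω' ∂P) ∂P) ∈ T.domain,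
      ∀ x₁ x₂ : X,
        ((∫ ω, (ιV (v ω) x₁ - ιV (∫ ω', v ω' ∂P) x₁) *
            (ιV (v ω) x₂ - ιV (∫ ω', v ω' ∂P) x₂) ∂P) = ιV (T ⟨_, hdomv x₂⟩) x₁) ∧
        ((∫ ω, (ιV (v ω) x₁ - ιV (∫ ω', v ω' ∂P) x₁) *
            (ιV (v ω) x₂ - ιV (∫ ω', v ω' ∂P) x₂) ∂P) = ιV (T ⟨_, hdomv x₁⟩) x₂) ∧
        (ιV (T ⟨_, hdomu x₁⟩) x₂ =
          ∫ ω, (ιU (u ω) x₁ - ιU (∫ ω', u ω' ∂P) x₁) *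
            (ιV (v ω) x₂ - ιV (∫ ω', v ω' ∂P) x₂) ∂P) := by
  set mu := ∫ ω, u ω ∂P
  set mv := ∫ ω, v ω ∂P
  let evU (x : X) : U →L[ℝ] ℝ := ⟨(LinearMap.proj x).comp ιU, hevU x⟩
  let evV (x : X) : V →L[ℝ] ℝ := ⟨(LinearMap.proj x).comp ιV, hevV x⟩
  have hmean : (mu, mv) ∈ T.graph :=
    hT.integral_mem_graph huv (hu2.integrable one_le_two) (hv2.integrable one_le_two)
  have hu' : MemLp (fun ω => u ω - mu) 2 P := hu2.sub (memLp_const mu)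
  have hv' : MemLp (fun ω => v ω - mv) 2 P := hv2.sub (memLp_const mv)
  have hgraph (s : Ω → ℝ) (hs : MemLp s 2 P) :
      (∫ ω, s ω • (u ω - mu) ∂P, ∫ ω, s ω • (v ω - mv) ∂P) ∈ T.graph :=
    hT.integral_smul_mem_graph (huv.mono fun _ hω => T.graph.sub_mem hω hmean) hu' hv' hs
  have heval (s : Ω → ℝ) (hs : MemLp s 2 P) (x : X) :
      ιV (∫ ω, s ω • (v ω - mv) ∂P) x = ∫ ω, s ω * (ιV (v ω) x - ιV mv x) ∂P := by
    have h := (evV x).apply_integral_smul (memLp_one_iff_integrable.mp (hv'.smul hs))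
    simp only [map_sub] at h
    exact h
  have hsU (x : X) : MemLp (fun ω => ιU (u ω) x - ιU mu x) 2 P :=
    ((evU x).comp_memLp' hu2).sub (memLp_const _)
  have hsV (x : X) : MemLp (fun ω => ιV (v ω) x - ιV mv x) 2 P :=
    ((evV x).comp_memLp' hv2).sub (memLp_const _)
  refine ⟨fun x => LinearPMap.mem_domain_of_mem_graph (hgraph _ (hsV x)),
    fun x => LinearPMap.mem_domain_of_mem_graph (hgraph _ (hsU x)), fun x₁ x₂ => ⟨?_, ?_, ?_⟩⟩
  · rw [LinearPMap.apply_eq_of_mem_graph (hgraph _ (hsV x₂)), heval _ (hsV x₂)]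
    simp_rw [mul_comm]
  · rw [LinearPMap.apply_eq_of_mem_graph (hgraph _ (hsV x₁)), heval _ (hsV x₁)]
  · rw [LinearPMap.apply_eq_of_mem_graph (hgraph _ (hsU x₁)), heval _ (hsU x₁)]

/-- Pointwise form of part (b) of the paper's main theorem: `k_v = T₁ T₂ k_u = T₂ T₁ k_u`.
For each `x`, the `U`-valued Bochner means `E[(v(x) − m_v(x)) • (u − m_u)]` and
`E[(u(x) − m_u(x)) • (u − m_u)]` lie in `dom T`; applying `T` to the former and
evaluating at `x₁` recovers `k_v(x₁, x₂)` (in either order of the arguments), and applying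
`T` to the latter, evaluated at `x₂`, gives the cross-covariance `Cov(u(x₁), v(x₂))`. -/
theorem stmt_5 {X : Type*} [Nonempty X] {U V : Type*}
    [NormedAddCommGroup U] [NormedSpace ℝ U] [CompleteSpace U]
    [NormedAddCommGroup V] [NormedSpace ℝ V] [CompleteSpace V]
    (ιU : U →ₗ[ℝ] (X → ℝ)) (hιU : Function.Injective ιU)
    (hevU : ∀ x : X, Continuous fun w : U => ιU w x)
    (ιV : V →ₗ[ℝ] (X → ℝ)) (hιV : Function.Injective ιV)
    (hevV : ∀ x : X, Continuous fun w : V => ιV w x)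
    (T : U →ₗ.[ℝ] V) (hT : T.IsClosed)
    {Ω : Type*} [MeasurableSpace Ω] (P : Measure Ω) [IsProbabilityMeasure P]
    (u : Ω → U) (v : Ω → V)
    (huv : ∀ᵐ ω ∂P, (u ω, v ω) ∈ T.graph)
    (hu2 : MemLp u 2 P) (hv2 : MemLp v 2 P) :
    ∃ hdomv : ∀ x : X,
        (∫ ω, (ιV (v ω) x - ιV (∫ ω', v ω' ∂P) x) • (u ω - ∫ ω', u ω' ∂P) ∂P) ∈ T.domain,
    ∃ hdomu : ∀ x : X,
        (∫ ω, (ιU (u ω) x - ιU (∫ ω', u ω' ∂P) x) • (u ω - ∫ ω', u ω' ∂P) ∂P) ∈ T.domain,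
      ∀ x₁ x₂ : X,
        ((∫ ω, (ιV (v ω) x₁ - ιV (∫ ω', v ω' ∂P) x₁) *
            (ιV (v ω) x₂ - ιV (∫ ω', v ω' ∂P) x₂) ∂P) = ιV (T ⟨_, hdomv x₂⟩) x₁) ∧
        ((∫ ω, (ιV (v ω) x₁ - ιV (∫ ω', v ω' ∂P) x₁) *
            (ιV (v ω) x₂ - ιV (∫ ω', v ω' ∂P) x₂) ∂P) = ιV (T ⟨_, hdomv x₁⟩) x₂) ∧
        (ιV (T ⟨_, hdomu x₁⟩) x₂ =
          ∫ ω, (ιU (u ω) x₁ - ιU (∫ ω', u ω' ∂P) x₁) *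
            (ιV (v ω) x₂ - ιV (∫ ω', v ω' ∂P) x₂) ∂P) :=
  stmt_5_general ιU hevU ιV hevV T hT P u v huv hu2 hv2
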